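/- Let U = I × J with I, J ⊆ ℝ open intervals, let a : J → ℝ and b : U → ℝ be smooth, and let D be the connection on U whose only nonzero Christoffel symbols are Γ¹_{12} = Γ¹_{21} = a(x²) and Γ¹_{22} = b(x¹,x²). If h : U → ℝ is smooth and satisfies the affine gradient Ricci soliton equation Hes_h(∂_i,∂_j) + 2ρ^{sym}_{ij} = 0 on U, then: (1) ∂_1∂_1 h = 0, so there are smooth functions h̃, ĥ : J → ℝ with h(x¹,x²) = h̃(x²) + x¹ ĥ(x²); (2) ĥ'(x²) = a(x²) ĥ(x²) for all x² ∈ J; and (3) ĥ''(x²) − ĥ(x²) ∂_1 b(x¹,x²) + 2 ∂_1∂_1 b(x¹,x²) = 0 for all (x¹,x²) ∈ U. -/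

import Mathlib

noncomputable section

/-- Points of the affine surface (local coordinates `(x¹,x²)`). -/
abbrev Pt2 := Fin 2 → ℝ

/-- Partial derivative `∂_{x^i}`. -/
def pd2 (i : Fin 2) (f : Pt2 → ℝ) (p : Pt2) : ℝ :=
  fderiv ℝ f p (Pi.single i 1)

/-- The Ricci tensor `ρ_{ij}` of the affine connection with Christoffel symbols `Γ^k_{ij}`:
`ρ_{ij} = Σ_k ∂_{x^k}Γ^k_{ij} − ∂_{x^i}(Σ_k Γ^k_{kj}) + Σ_{k,l}(Γ^k_{kl}Γ^l_{ij} − Γ^k_{il}Γ^l_{kj})`. -/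
def ricciD (Γ : Fin 2 → Fin 2 → Fin 2 → Pt2 → ℝ) (i j : Fin 2) (p : Pt2) : ℝ :=
  (∑ k : Fin 2, pd2 k (Γ k i j) p) - pd2 i (fun q => ∑ k : Fin 2, Γ k k j q) p
    + ∑ k : Fin 2, ∑ l : Fin 2, (Γ k k l p * Γ l i j p - Γ k i l p * Γ l k j p)

/-- The symmetric part `ρ^{sym}_{ij} = ½(ρ_{ij}+ρ_{ji})` of the Ricci tensor. -/
def ricciDSym (Γ : Fin 2 → Fin 2 → Fin 2 → Pt2 → ℝ) (i j : Fin 2) (p : Pt2) : ℝ :=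
  (ricciD Γ i j p + ricciD Γ j i p) / 2

/-- The affine Hessian `Hes_h(∂_i,∂_j) = ∂_i∂_j h − Σ_k Γ^k_{ij} ∂_k h`. -/
def hessD (Γ : Fin 2 → Fin 2 → Fin 2 → Pt2 → ℝ) (h : Pt2 → ℝ) (i j : Fin 2) (p : Pt2) : ℝ :=
  pd2 i (pd2 j h) p - ∑ k : Fin 2, Γ k i j p * pd2 k h p

/-- The covariant derivative of the Ricci tensor:
`(D_{∂_i}ρ)_{jk} = ∂_i ρ_{jk} − Σ_l Γ^l_{ij} ρ_{lk} − Σ_l Γ^l_{ik} ρ_{jl}`. -/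
def covRicciD (Γ : Fin 2 → Fin 2 → Fin 2 → Pt2 → ℝ) (i j k : Fin 2) (p : Pt2) : ℝ :=
  pd2 i (fun q => ricciD Γ j k q) p - (∑ l : Fin 2, Γ l i j p * ricciD Γ l k p)
    - ∑ l : Fin 2, Γ l i k p * ricciD Γ j l p

/-- The connection whose only nonzero Christoffel symbols are
`Γ¹_{12} = Γ¹_{21} = a(x²)` and `Γ¹_{22} = b(x¹,x²)`
(symmetric rank-one Ricci tensor with parallel kernel). -/
def ΓK (a : ℝ → ℝ) (b : Pt2 → ℝ) : Fin 2 → Fin 2 → Fin 2 → Pt2 → ℝ := fun k i j x =>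
  if k = 0 ∧ ((i = 0 ∧ j = 1) ∨ (i = 1 ∧ j = 0)) then a (x 1)
  else if k = 0 ∧ i = 1 ∧ j = 1 then b x
  else 0

/-! ### Auxiliary lemmas -/

section Aux

lemma vec2_eta (x : Pt2) : ![x 0, x 1] = x := by
  funext i; fin_cases i <;> simp

lemma single0_eq : (Pi.single 0 1 : Pt2) = ![1, 0] := by
  funext i; fin_cases i <;> simp [Pi.single_apply]

lemma single1_eq : (Pi.single 1 1 : Pt2) = ![0, 1] := by
  funext i; fin_cases i <;> simp [Pi.single_apply]

lemma hasDerivAt_line0 (s t : ℝ) : HasDerivAt (fun u : ℝ => (![u, s] : Pt2)) ![1, 0] t := by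
  have he : (fun u : ℝ => (![u, s] : Pt2)) = fun u => u • (![1, 0] : Pt2) + ![0, s] := by
    funext u; funext i; fin_cases i <;> simp
  rw [he]
  simpa using ((hasDerivAt_id t).smul_const (![1, 0] : Pt2)).add_const (![0, s] : Pt2)

lemma hasDerivAt_line1 (s t : ℝ) : HasDerivAt (fun u : ℝ => (![s, u] : Pt2)) ![0, 1] t := by
  have he : (fun u : ℝ => (![s, u] : Pt2)) = fun u => u • (![0, 1] : Pt2) + ![s, 0] := by
    funext u; funext i; fin_cases i <;> simp
  rw [he]
  simpa using ((hasDerivAt_id t).smul_const (![0, 1] : Pt2)).add_const (![s, 0] : Pt2)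

lemma pd2_line0 {f : Pt2 → ℝ} {s t : ℝ} (hf : DifferentiableAt ℝ f ![t, s]) :
    HasDerivAt (fun u => f ![u, s]) (pd2 0 f ![t, s]) t := by
  have := hf.hasFDerivAt.comp_hasDerivAt t (hasDerivAt_line0 s t)
  rw [pd2, single0_eq]; exact this

lemma pd2_line1 {f : Pt2 → ℝ} {s t : ℝ} (hf : DifferentiableAt ℝ f ![s, t]) :
    HasDerivAt (fun u => f ![s, u]) (pd2 1 f ![s, t]) t := by
  have := hf.hasFDerivAt.comp_hasDerivAt t (hasDerivAt_line1 s t)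
  rw [pd2, single1_eq]; exact this

lemma contDiffOn_pd2 {f : Pt2 → ℝ} {s : Set Pt2} (hs : IsOpen s) (hf : ContDiffOn ℝ (⊤ : ℕ∞) f s)
    (i : Fin 2) : ContDiffOn ℝ (⊤ : ℕ∞) (pd2 i f) s :=
  (hf.fderiv_of_isOpen hs (by simp)).clm_apply contDiffOn_const

lemma diffAt_of_cdo {E F : Type*} [NormedAddCommGroup E] [NormedSpace ℝ E]
    [NormedAddCommGroup F] [NormedSpace ℝ F] {f : E → F} {s : Set E} (hs : IsOpen s)
    (hf : ContDiffOn ℝ (⊤ : ℕ∞) f s) {x : E} (hx : x ∈ s) : DifferentiableAt ℝ f x :=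
  (hf.contDiffAt (hs.mem_nhds hx)).differentiableAt (by simp)

def proj2 (i : Fin 2) : Pt2 →L[ℝ] ℝ := ContinuousLinearMap.proj i

@[simp] lemma proj2_apply (i : Fin 2) (v : Pt2) : proj2 i v = v i := rfl

lemma pd2_proj0 {g : ℝ → ℝ} {p : Pt2} (hg : DifferentiableAt ℝ g (p 1)) :
    pd2 0 (fun q : Pt2 => g (q 1)) p = 0 := by
  have hπ : HasFDerivAt (fun q : Pt2 => q 1) (proj2 1) p := hasFDerivAt_apply (𝕜 := ℝ) 1 p
  have := (hg.hasDerivAt.comp_hasFDerivAt p hπ).fderiv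
  rw [Function.comp_def] at this
  rw [pd2, this]
  simp [Pi.single_apply]

lemma pd2_proj1 {g : ℝ → ℝ} {p : Pt2} (hg : DifferentiableAt ℝ g (p 1)) :
    pd2 1 (fun q : Pt2 => g (q 1)) p = deriv g (p 1) := by
  have hπ : HasFDerivAt (fun q : Pt2 => q 1) (proj2 1) p := hasFDerivAt_apply (𝕜 := ℝ) 1 p
  have := (hg.hasDerivAt.comp_hasFDerivAt p hπ).fderiv
  rw [Function.comp_def] at this
  rw [pd2, this]
  simp [Pi.single_apply]

lemma pd2_zero (i : Fin 2) (p : Pt2) : pd2 i (fun _ => (0:ℝ)) p = 0 := by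
  simp [pd2]

lemma fderiv_zero_of_hasDerivAt_zero {g : ℝ → ℝ} {t : ℝ} (hg : HasDerivAt g 0 t) :
    fderiv ℝ g t = 0 := by
  have := hg.hasFDerivAt.fderiv
  rw [this]
  ext x
  simp

lemma pd2_congr {F1 F2 : Pt2 → ℝ} {s : Set Pt2} (hs : IsOpen s)
    (heq : ∀ q ∈ s, F1 q = F2 q) {p : Pt2} (hp : p ∈ s) (i : Fin 2) :
    pd2 i F1 p = pd2 i F2 p := by
  have : F1 =ᶠ[nhds p] F2 := Filter.eventuallyEq_of_mem (hs.mem_nhds hp) heq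
  simp [pd2, this.fderiv_eq]

lemma pd2_one_aff {u v : ℝ → ℝ} {p : Pt2} (h1 : DifferentiableAt ℝ u (p 1))
    (h2 : DifferentiableAt ℝ v (p 1)) :
    pd2 1 (fun q : Pt2 => u (q 1) + q 0 * v (q 1)) p = deriv u (p 1) + p 0 * deriv v (p 1) := by
  have hπ1 : HasFDerivAt (fun q : Pt2 => q 1) (proj2 1) p := hasFDerivAt_apply (𝕜 := ℝ) 1 p
  have hπ0 : HasFDerivAt (fun q : Pt2 => q 0) (proj2 0) p := hasFDerivAt_apply (𝕜 := ℝ) 0 p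
  have hu : HasFDerivAt (fun q : Pt2 => u (q 1)) ((deriv u (p 1)) • proj2 1) p :=
    h1.hasDerivAt.comp_hasFDerivAt p hπ1
  have hv : HasFDerivAt (fun q : Pt2 => v (q 1)) ((deriv v (p 1)) • proj2 1) p :=
    h2.hasDerivAt.comp_hasFDerivAt p hπ1
  have hsum := hu.add (hπ0.mul hv)
  rw [pd2, show (fun q : Pt2 => u (q 1) + q 0 * v (q 1)) = ((fun q : Pt2 => u (q 1)) + (fun q : Pt2 => q 0) * fun q : Pt2 => v (q 1)) from rfl, hsum.fderiv]
  simp [Pi.single_apply]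

variable (a : ℝ → ℝ) (b : Pt2 → ℝ)

lemma ΓK_f000 : ΓK a b 0 0 0 = fun _ => (0:ℝ) := by funext x; simp [ΓK]
lemma ΓK_f001 : ΓK a b 0 0 1 = fun x => a (x 1) := by funext x; simp [ΓK]
lemma ΓK_f010 : ΓK a b 0 1 0 = fun x => a (x 1) := by funext x; simp [ΓK]
lemma ΓK_f011 : ΓK a b 0 1 1 = b := by funext x; simp [ΓK]
lemma ΓK_f1 (i j : Fin 2) : ΓK a b 1 i j = fun _ => (0:ℝ) := by funext x; simp [ΓK]

end Aux

/-- On `U = I × J`, for the connection with only nonzero Christoffel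
symbols `Γ¹_{12} = Γ¹_{21} = a(x²)`, `Γ¹_{22} = b(x¹,x²)`, any affine gradient Ricci
soliton potential `h` satisfies: (1) `∂₁∂₁h = 0`, so `h = h̃(x²) + x¹ĥ(x²)`;
(2) `ĥ' = a ĥ` on `J`; and (3) `ĥ'' − ĥ ∂₁b + 2 ∂₁∂₁b = 0` on `U`. -/
theorem stmt17 (I J : Set ℝ) (hI : IsOpen I) (hIint : I.OrdConnected)
    (hJ : IsOpen J) (hJint : J.OrdConnected)
    (U : Set Pt2) (hUdef : U = {x : Pt2 | x 0 ∈ I ∧ x 1 ∈ J})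
    (a : ℝ → ℝ) (ha : ContDiffOn ℝ (⊤ : ℕ∞) a J)
    (b : Pt2 → ℝ) (hb : ContDiffOn ℝ (⊤ : ℕ∞) b U)
    (h : Pt2 → ℝ) (hh : ContDiffOn ℝ (⊤ : ℕ∞) h U)
    (hsol : ∀ x ∈ U, ∀ i j : Fin 2,
      hessD (ΓK a b) h i j x + 2 * ricciDSym (ΓK a b) i j x = 0) :
    (∀ x ∈ U, pd2 0 (pd2 0 h) x = 0) ∧
    ∃ ht hhat : ℝ → ℝ, ContDiffOn ℝ (⊤ : ℕ∞) ht J ∧ ContDiffOn ℝ (⊤ : ℕ∞) hhat J ∧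
      (∀ x ∈ U, h x = ht (x 1) + x 0 * hhat (x 1)) ∧
      (∀ y ∈ J, deriv hhat y = a y * hhat y) ∧
      (∀ x ∈ U, deriv (deriv hhat) (x 1) - hhat (x 1) * pd2 0 b x
        + 2 * pd2 0 (pd2 0 b) x = 0) := by
  have hUopen : IsOpen U := by
    rw [hUdef]
    exact (hI.preimage (continuous_apply 0)).inter (hJ.preimage (continuous_apply 1))
  have hmem0 : ∀ x ∈ U, x 0 ∈ I := by intro x hx; rw [hUdef] at hx; exact hx.1
  have hmem1 : ∀ x ∈ U, x 1 ∈ J := by intro x hx; rw [hUdef] at hx; exact hx.2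
  have hmemU : ∀ {s t : ℝ}, s ∈ I → t ∈ J → (![s, t] : Pt2) ∈ U := by
    intro s t hs ht; rw [hUdef]; constructor <;> simp [hs, ht]
  have hda : ∀ y ∈ J, DifferentiableAt ℝ a y := fun y hy => diffAt_of_cdo hJ ha hy
  -- the three scalar soliton equations
  have E00 : ∀ x ∈ U, pd2 0 (pd2 0 h) x = 0 := by
    intro x hx
    have hs := hsol x hx 0 0
    simp only [hessD, ricciDSym, ricciD, Fin.sum_univ_two, ΓK_f000, ΓK_f001, ΓK_f010,
      ΓK_f011, ΓK_f1, pd2_zero, zero_add, add_zero, mul_zero, zero_mul, sub_zero, zero_sub,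
      sub_self] at hs
    linarith
  have E10 : ∀ x ∈ U, pd2 1 (pd2 0 h) x = a (x 1) * pd2 0 h x := by
    intro x hx
    have hs := hsol x hx 1 0
    have hpa0 : pd2 0 (fun q : Pt2 => a (q 1)) x = 0 := pd2_proj0 (hda _ (hmem1 x hx))
    simp only [hessD, ricciDSym, ricciD, Fin.sum_univ_two, ΓK_f000, ΓK_f001, ΓK_f010,
      ΓK_f011, ΓK_f1, pd2_zero, hpa0, zero_add, add_zero, mul_zero, zero_mul, sub_zero,
      zero_sub, sub_self] at hs
    linarith
  have E11 : ∀ x ∈ U, pd2 1 (pd2 1 h) x - b x * pd2 0 h x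
      + 2 * (pd2 0 b x - deriv a (x 1) - a (x 1) * a (x 1)) = 0 := by
    intro x hx
    have hs := hsol x hx 1 1
    have hpa0 : pd2 0 (fun q : Pt2 => a (q 1)) x = 0 := pd2_proj0 (hda _ (hmem1 x hx))
    have hpa1 : pd2 1 (fun q : Pt2 => a (q 1)) x = deriv a (x 1) := pd2_proj1 (hda _ (hmem1 x hx))
    simp only [hessD, ricciDSym, ricciD, Fin.sum_univ_two, ΓK_f000, ΓK_f001, ΓK_f010,
      ΓK_f011, ΓK_f1, pd2_zero, hpa0, hpa1, zero_add, add_zero, mul_zero, zero_mul, sub_zero,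
      zero_sub, sub_self] at hs
    linarith
  refine ⟨E00, ?_⟩
  rcases I.eq_empty_or_nonempty with hIe | ⟨c, hc⟩
  · -- I empty, so U empty
    have hUe : ∀ x : Pt2, x ∉ U := by
      intro x hx; have := hmem0 x hx; rw [hIe] at this; exact this
    exact ⟨fun _ => 0, fun _ => 0, contDiffOn_const, contDiffOn_const,
      fun x hx => absurd hx (hUe x), fun y _ => by simp,
      fun x hx => absurd hx (hUe x)⟩
  -- main case: pick c ∈ I
  have hIconv : Convex ℝ I := convex_iff_ordConnected.mpr hIint
  set hhat : ℝ → ℝ := fun y => pd2 0 h ![c, y] with hhat_def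
  set ht : ℝ → ℝ := fun y => h ![c, y] - c * hhat y with ht_def
  have hMc : ContDiff ℝ (⊤ : ℕ∞) (fun y : ℝ => (![c, y] : Pt2)) := by
    apply contDiff_pi.2
    intro i
    fin_cases i
    · simpa using contDiff_const
    · exact contDiff_id
  have hMcmaps : ∀ y ∈ J, (![c, y] : Pt2) ∈ U := fun y hy => hmemU hc hy
  have hd0h : ContDiffOn ℝ (⊤ : ℕ∞) (pd2 0 h) U := contDiffOn_pd2 hUopen hh 0
  have hhat_smooth : ContDiffOn ℝ (⊤ : ℕ∞) hhat J :=
    hd0h.comp hMc.contDiffOn hMcmaps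
  have ht_smooth : ContDiffOn ℝ (⊤ : ℕ∞) ht J :=
    (hh.comp hMc.contDiffOn hMcmaps).sub (contDiffOn_const.mul hhat_smooth)
  -- Step A : pd2 0 h is constant in the first variable
  have hA : ∀ x ∈ U, pd2 0 h x = hhat (x 1) := by
    intro x hx
    have hx0 := hmem0 x hx
    have hx1 := hmem1 x hx
    have hgd : ∀ t ∈ I, HasDerivAt (fun u => pd2 0 h ![u, x 1]) 0 t := by
      intro t ht'
      have hdiff : DifferentiableAt ℝ (pd2 0 h) ![t, x 1] :=
        diffAt_of_cdo hUopen hd0h (hmemU ht' hx1)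
      have := pd2_line0 hdiff
      rwa [E00 _ (hmemU ht' hx1)] at this
    have hconst := hIconv.is_const_of_fderivWithin_eq_zero
      (f := fun u => pd2 0 h ![u, x 1])
      (fun t ht' => ((hgd t ht').differentiableAt).differentiableWithinAt)
      (fun t ht' => by
        rw [fderivWithin_of_isOpen hI ht']
        exact fderiv_zero_of_hasDerivAt_zero (hgd t ht')) hx0 hc
    calc pd2 0 h x = pd2 0 h ![x 0, x 1] := by rw [vec2_eta]
      _ = pd2 0 h ![c, x 1] := hconst
      _ = hhat (x 1) := rfl
  -- Step B : representation of h
  have hrep : ∀ x ∈ U, h x = ht (x 1) + x 0 * hhat (x 1) := by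
    intro x hx
    have hx0 := hmem0 x hx
    have hx1 := hmem1 x hx
    have hgd : ∀ t ∈ I, HasDerivAt (fun u => h ![u, x 1] - u * hhat (x 1)) 0 t := by
      intro t ht'
      have hdiff : DifferentiableAt ℝ h ![t, x 1] := diffAt_of_cdo hUopen hh (hmemU ht' hx1)
      have h1 := (pd2_line0 hdiff).sub (((hasDerivAt_id t).mul_const (hhat (x 1))))
      have h2 : pd2 0 h ![t, x 1] - 1 * hhat (x 1) = 0 := by
        rw [hA _ (hmemU ht' hx1)]; simp
      rwa [h2] at h1
    have hconst := hIconv.is_const_of_fderivWithin_eq_zero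
      (f := fun u => h ![u, x 1] - u * hhat (x 1))
      (fun t ht' => ((hgd t ht').differentiableAt).differentiableWithinAt)
      (fun t ht' => by
        rw [fderivWithin_of_isOpen hI ht']
        exact fderiv_zero_of_hasDerivAt_zero (hgd t ht')) hx0 hc
    have hx_eq : h ![x 0, x 1] - x 0 * hhat (x 1) = h ![c, x 1] - c * hhat (x 1) := hconst
    rw [vec2_eta] at hx_eq
    have : ht (x 1) = h ![c, x 1] - c * hhat (x 1) := rfl
    rw [this]
    linarith
  -- Step C : the ODE for hhat
  have hode : ∀ y ∈ J, deriv hhat y = a y * hhat y := by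
    intro y hy
    have hdiff : DifferentiableAt ℝ (pd2 0 h) ![c, y] :=
      diffAt_of_cdo hUopen hd0h (hmemU hc hy)
    have hd := pd2_line1 hdiff
    have : deriv hhat y = pd2 1 (pd2 0 h) ![c, y] := hd.deriv
    rw [this, E10 _ (hmemU hc hy)]
    simp [hhat_def]
  refine ⟨ht, hhat, ht_smooth, hhat_smooth, hrep, hode, ?_⟩
  -- Step D : the second-order equation
  have hhat'_smooth : ContDiffOn ℝ (⊤ : ℕ∞) (deriv hhat) J :=
    hhat_smooth.deriv_of_isOpen hJ (by simp)
  have ht'_smooth : ContDiffOn ℝ (⊤ : ℕ∞) (deriv ht) J :=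
    ht_smooth.deriv_of_isOpen hJ (by simp)
  -- pd2 1 h on U
  have hp1h : ∀ x ∈ U, pd2 1 h x = deriv ht (x 1) + x 0 * deriv hhat (x 1) := by
    intro x hx
    have hx1 := hmem1 x hx
    rw [pd2_congr hUopen hrep hx 1]
    exact pd2_one_aff (diffAt_of_cdo hJ ht_smooth hx1) (diffAt_of_cdo hJ hhat_smooth hx1)
  have hp11h : ∀ x ∈ U, pd2 1 (pd2 1 h) x
      = deriv (deriv ht) (x 1) + x 0 * deriv (deriv hhat) (x 1) := by
    intro x hx
    have hx1 := hmem1 x hx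
    rw [pd2_congr hUopen hp1h hx 1]
    exact pd2_one_aff (diffAt_of_cdo hJ ht'_smooth hx1) (diffAt_of_cdo hJ hhat'_smooth hx1)
  -- rewritten E11
  have E11' : ∀ x ∈ U, deriv (deriv ht) (x 1) + x 0 * deriv (deriv hhat) (x 1)
      - b x * hhat (x 1)
      + 2 * (pd2 0 b x - deriv a (x 1) - a (x 1) * a (x 1)) = 0 := by
    intro x hx
    have := E11 x hx
    rw [hp11h x hx, hA x hx] at this
    exact this
  intro x hx
  have hx0 := hmem0 x hx
  have hx1 := hmem1 x hx
  set x1 := x 1 with hx1def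
  -- differentiate E11' along the line t ↦ ![t, x1]
  have hd0b : ContDiffOn ℝ (⊤ : ℕ∞) (pd2 0 b) U := contDiffOn_pd2 hUopen hb 0
  have hφ : ∀ t ∈ I, HasDerivAt
      (fun u : ℝ => deriv (deriv ht) x1 + u * deriv (deriv hhat) x1
        - b ![u, x1] * hhat x1 + 2 * (pd2 0 b ![u, x1] - deriv a x1 - a x1 * a x1))
      (deriv (deriv hhat) x1 - pd2 0 b ![t, x1] * hhat x1
        + 2 * pd2 0 (pd2 0 b) ![t, x1]) t := by
    intro t ht'
    have hbd : DifferentiableAt ℝ b ![t, x1] := diffAt_of_cdo hUopen hb (hmemU ht' hx1)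
    have h0bd : DifferentiableAt ℝ (pd2 0 b) ![t, x1] :=
      diffAt_of_cdo hUopen hd0b (hmemU ht' hx1)
    have h1 : HasDerivAt (fun u : ℝ => deriv (deriv ht) x1 + u * deriv (deriv hhat) x1)
        (deriv (deriv hhat) x1) t := by
      simpa using ((hasDerivAt_id t).mul_const (deriv (deriv hhat) x1) :
        HasDerivAt (fun y : ℝ => y * deriv (deriv hhat) x1) _ t)
    have h2 : HasDerivAt (fun u : ℝ => b ![u, x1] * hhat x1)
        (pd2 0 b ![t, x1] * hhat x1) t := (pd2_line0 hbd).mul_const _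
    have h3 : HasDerivAt (fun u : ℝ => 2 * (pd2 0 b ![u, x1] - deriv a x1 - a x1 * a x1))
        (2 * pd2 0 (pd2 0 b) ![t, x1]) t := by
      have := ((pd2_line0 h0bd).sub_const (deriv a x1)).sub_const (a x1 * a x1)
      simpa using this.const_mul 2
    exact (h1.sub h2).add h3
  have hzero : ∀ᶠ u in nhds (x 0), (fun u : ℝ => deriv (deriv ht) x1
      + u * deriv (deriv hhat) x1 - b ![u, x1] * hhat x1
      + 2 * (pd2 0 b ![u, x1] - deriv a x1 - a x1 * a x1)) u = (fun _ : ℝ => (0:ℝ)) u := by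
    filter_upwards [hI.mem_nhds hx0] with u hu
    have := E11' ![u, x1] (hmemU hu hx1)
    simpa using this
  have hderiv_eq : deriv (deriv hhat) x1 - pd2 0 b ![x 0, x1] * hhat x1
      + 2 * pd2 0 (pd2 0 b) ![x 0, x1] = 0 := by
    have h1 := (hφ (x 0) hx0).deriv
    have h2 : deriv (fun u : ℝ => deriv (deriv ht) x1 + u * deriv (deriv hhat) x1
        - b ![u, x1] * hhat x1 + 2 * (pd2 0 b ![u, x1] - deriv a x1 - a x1 * a x1)) (x 0)
        = deriv (fun _ : ℝ => (0:ℝ)) (x 0) := Filter.EventuallyEq.deriv_eq hzero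
    rw [h2] at h1
    simpa using h1.symm
  rw [hx1def, vec2_eta] at hderiv_eq
  linarith
end
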